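/- For a fixed path $(X_s)_{0\le s\le \Delta}$ with bounded measurable $\lambda \ge 0$, and any constants $c\in\mathbb{R}$, $\eta>0$, the Poisson estimator $E = \exp(c+\eta)\big[\mathbb{I}_{\{\kappa=0\}} + \mathbb{I}_{\{\kappa>0\}}\prod_{i=1}^{\kappa}\tfrac{-\Delta\lambda(X_{\tau_i}) - c}{\eta}\big]$, where $\kappa\sim\mathcal{P}o(\eta)$ and $\tau_1,\dots,\tau_\kappa$ are i.i.d. uniform on $(0,\Delta)$ independent of $\kappa$, satisfies $\mathbb{E}[E] = \exp(-\int_0^\Delta \lambda(X_s)\,ds)$. -/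

import Mathlib

/-!
Write `m` for the common mean of the factors `(-Δ λ(X_{τ_i}) - c) / η`; since `Δ λ(X_τ)` with
`τ ~ 𝒰(0, Δ)` is an unbiased estimate of `I = ∫₀^Δ λ(X_s) ds`, we have `η m = -I - c`.
Conditioning on `κ = k` and using independence, the `k`-th term of the estimator has mean
`P(κ = k) m^k`, so the whole product has mean the Poisson generating function
`∑ₖ e^{-η} ηᵏ/k! mᵏ = exp (η (m - 1)) = exp (-I - c - η)`, which the prefactor `exp (c + η)`
turns into `exp (-I)`. Boundedness of `λ` makes the factors bounded, which justifies exchanging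
expectation and sum.
-/

open MeasureTheory ProbabilityTheory Real
open scoped NNReal ENNReal

/-- Index type for the joint independence of the Poisson variable `κ` (`none`)
and the uniform times `τ i` (`some i`). -/
def PoissonEstIndex : Option ℕ → Type
  | none => ℕ
  | some _ => ℝ

instance (j : Option ℕ) : MeasurableSpace (PoissonEstIndex j) := by
  cases j with
  | none => exact (inferInstance : MeasurableSpace ℕ)
  | some _ => exact (inferInstance : MeasurableSpace ℝ)

open Finset
open scoped Nat

set_option linter.deprecated false in
lemma poissonPMF_toMeasure (r : ℝ≥0) : (poissonPMF r).toMeasure = poissonMeasure r := by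
  refine Measure.ext_of_singleton fun n => ?_
  rw [PMF.toMeasure_apply_singleton _ _ (measurableSet_singleton n), poissonMeasure_singleton,
    ← poissonPMFReal_ofReal_eq_poissonPMF, poissonPMFReal]

lemma hasSum_poissonMeasure_real_singleton_mul_pow (r : ℝ≥0) (x : ℝ) :
    HasSum (fun n ↦ (poissonMeasure r).real {n} * x ^ n) (exp (r * (x - 1))) := by
  have := (NormedSpace.expSeries_div_hasSum_exp ((r : ℝ) * x)).mul_left (exp (-r))
  rw [← exp_eq_exp_ℝ, ← exp_add] at this
  have hterm : (fun n : ℕ ↦ (poissonMeasure r).real {n} * x ^ n) =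
      fun n ↦ exp (-r) * ((r * x) ^ n / n !) := by
    ext n
    rw [poissonMeasure_real_singleton, mul_pow]
    ring
  rwa [hterm, show (r : ℝ) * (x - 1) = -r + r * x by ring]

lemma MeasureTheory.pdf.IsUniform.integral_comp_Ioo {Ω : Type*} [MeasurableSpace Ω] {μ : Measure Ω}
    {X : Ω → ℝ} {a b : ℝ} (hab : a < b) (hX : pdf.IsUniform X (Set.Ioo a b) μ)
    {f : ℝ → ℝ} (hf : Measurable f) :
    ∫ ω, f (X ω) ∂μ = (b - a)⁻¹ * ∫ x in a..b, f x := by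
  have hvol : volume (Set.Ioo a b) = ENNReal.ofReal (b - a) := Real.volume_Ioo
  have hXm : AEMeasurable X μ := hX.aemeasurable (by simp [hvol, hab]) (by simp [hvol])
  rw [← integral_map hXm hf.aestronglyMeasurable, hX, ProbabilityTheory.cond,
    integral_smul_measure, hvol, ENNReal.toReal_inv, ENNReal.toReal_ofReal (sub_nonneg.2 hab.le),
    smul_eq_mul, intervalIntegral.integral_of_le hab.le, integral_Ioc_eq_integral_Ioo]

lemma integral_neg_mul_comp_sub_div_of_isUniform {Ω : Type*} [MeasurableSpace Ω] {μ : Measure Ω}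
    {X : Ω → ℝ} {Δ : ℝ} (hΔ : 0 < Δ) (hX : pdf.IsUniform X (Set.Ioo 0 Δ) μ) {g : ℝ → ℝ}
    (hg : Measurable g) (hg_int : IntervalIntegrable g volume 0 Δ) (c η : ℝ) :
    ∫ ω, (-(Δ * g (X ω)) - c) / η ∂μ = (-(∫ s in 0..Δ, g s) - c) / η := by
  rw [pdf.IsUniform.integral_comp_Ioo (f := fun s ↦ (-(Δ * g s) - c) / η) hΔ hX (by fun_prop),
    intervalIntegral.integral_div,
    intervalIntegral.integral_sub (f := fun s ↦ -(Δ * g s)) (hg_int.const_mul Δ).neg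
      intervalIntegrable_const,
    intervalIntegral.integral_neg, intervalIntegral.integral_const_mul,
    intervalIntegral.integral_const, smul_eq_mul]
  field_simp [hΔ.ne']
  ring

lemma abs_neg_mul_sub_div_le {Δ x C c η : ℝ} (hΔ : 0 ≤ Δ) (hη : 0 < η) (hx : 0 ≤ x)
    (hxC : x ≤ C) : |(-(Δ * x) - c) / η| ≤ (Δ * C + |c|) / η := by
  rw [abs_div, abs_of_pos hη]
  gcongr
  calc |-(Δ * x) - c| ≤ |-(Δ * x)| + |c| := abs_sub _ _
    _ ≤ Δ * C + |c| := by
      rw [abs_neg, abs_of_nonneg (mul_nonneg hΔ hx)]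
      gcongr

lemma norm_prod_range_le_pow {R : Type*} [NormedCommRing R] [NormOneClass R] {f : ℕ → R} {a : ℝ}
    (hf : ∀ i, ‖f i‖ ≤ a) (k : ℕ) : ‖∏ i ∈ range k, f i‖ ≤ a ^ k :=
  calc ‖∏ i ∈ range k, f i‖ ≤ ∏ i ∈ range k, ‖f i‖ := norm_prod_le _ _
    _ ≤ ∏ _i ∈ range k, a := prod_le_prod (fun _ _ ↦ norm_nonneg _) fun i _ ↦ hf i
    _ = a ^ k := by rw [prod_const, card_range]

section

variable {Ω : Type*} [MeasurableSpace Ω] {μ : Measure Ω} {κ : Ω → ℕ} {Y : ℕ → Ω → ℝ}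

lemma integral_ite_eq_measureReal_map (hκ : AEMeasurable κ μ) (k : ℕ) :
    ∫ ω, (if κ ω = k then (1 : ℝ) else 0) ∂μ = (μ.map κ).real {k} := by
  have hind : (fun n : ℕ ↦ if n = k then (1 : ℝ) else 0) = ({k} : Set ℕ).indicator 1 := by
    ext n
    simp [Set.indicator_apply]
  rw [← integral_map (f := fun n : ℕ ↦ if n = k then (1 : ℝ) else 0) hκ
    StronglyMeasurable.of_discrete.aestronglyMeasurable, hind,
    integral_indicator_one (measurableSet_singleton k)]

lemma integral_ite_mul_prod_range_of_iIndepFun (hκ : AEMeasurable κ μ)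
    (hY : ∀ i, AEStronglyMeasurable (Y i) μ)
    (hindep : iIndepFun
      (fun j : Option ℕ ↦ Option.rec (motive := fun j ↦ Ω → PoissonEstIndex j) κ Y j) μ)
    (k : ℕ) :
    ∫ ω, (if κ ω = k then (1 : ℝ) else 0) * ∏ i ∈ range k, Y i ω ∂μ
      = (μ.map κ).real {k} * ∏ i ∈ range k, ∫ ω, Y i ω ∂μ := by
  let G : ∀ j, PoissonEstIndex j → ℝ := fun j ↦
    Option.rec (motive := fun j ↦ PoissonEstIndex j → ℝ) (fun n : ℕ ↦ if n = k then 1 else 0)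
      (fun _ ↦ id) j
  have hG : ∀ j, Measurable (G j) := by
    rintro (_ | _)
    · exact measurable_from_top
    · exact measurable_id
  -- Keep only `κ` and the first `k` factors, indexed by `Option (Fin k)`, to get a finite family.
  have hW := (hindep.comp G hG).precomp (Option.map_injective (Fin.val_injective (n := k)))
  have hWm : ∀ j : Option (Fin k), AEStronglyMeasurable
      (G (j.map (↑)) ∘ Option.rec (motive := fun j ↦ Ω → PoissonEstIndex j) κ Y (j.map (↑))) μ := by
    rintro (_ | i)
    · exact (measurable_from_top.comp_aemeasurable hκ).aestronglyMeasurable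
    · exact hY i
  have := hW.integral_fun_prod_eq_prod_integral hWm
  simp only [Fintype.prod_option] at this
  change ∫ ω, (if κ ω = k then (1 : ℝ) else 0) * ∏ i : Fin k, Y i ω ∂μ
    = (∫ ω, (if κ ω = k then (1 : ℝ) else 0) ∂μ) * ∏ i : Fin k, ∫ ω, Y i ω ∂μ at this
  rw [integral_ite_eq_measureReal_map hκ] at this
  simpa only [Finset.prod_range] using this

lemma integral_prod_range_eq_tsum_of_iIndepFun [IsProbabilityMeasure μ] (hκ : AEMeasurable κ μ)
    (hY : ∀ i, AEStronglyMeasurable (Y i) μ)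
    (hindep : iIndepFun
      (fun j : Option ℕ ↦ Option.rec (motive := fun j ↦ Ω → PoissonEstIndex j) κ Y j) μ)
    {a m : ℝ} (hbdd : ∀ i ω, ‖Y i ω‖ ≤ a) (hmean : ∀ i, ∫ ω, Y i ω ∂μ = m)
    (hsum : Summable fun k ↦ (μ.map κ).real {k} * a ^ k) :
    ∫ ω, ∏ i ∈ range (κ ω), Y i ω ∂μ = ∑' k, (μ.map κ).real {k} * m ^ k := by
  set F : ℕ → Ω → ℝ := fun k ω ↦ (if κ ω = k then (1 : ℝ) else 0) * ∏ i ∈ range k, Y i ω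
  have hF_tsum (ω : Ω) : ∏ i ∈ range (κ ω), Y i ω = ∑' k, F k ω := by
    rw [tsum_eq_single (κ ω) fun k hk ↦ by simp [F, Ne.symm hk]]
    simp [F]
  have hprod (k : ℕ) (ω : Ω) : ‖∏ i ∈ range k, Y i ω‖ ≤ a ^ k :=
    norm_prod_range_le_pow (fun i ↦ hbdd i ω) k
  have hF_norm (k : ℕ) (ω : Ω) : ‖F k ω‖ ≤ (if κ ω = k then (1 : ℝ) else 0) * a ^ k := by
    rw [norm_mul]
    split_ifs
    · rw [norm_one, one_mul, one_mul]
      exact hprod k ω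
    · simp
  have hind_int (k : ℕ) : Integrable (fun ω ↦ if κ ω = k then (1 : ℝ) else 0) μ :=
    .of_bound ((measurable_from_top (f := fun n : ℕ ↦ if n = k then (1 : ℝ) else 0))
      |>.comp_aemeasurable hκ).aestronglyMeasurable 1 (ae_of_all _ fun ω ↦ by split_ifs <;> simp)
  have hF_int (k : ℕ) : Integrable (F k) μ := by
    refine .of_bound ((hind_int k).aestronglyMeasurable.mul
      (Finset.aestronglyMeasurable_fun_prod _ fun i _ ↦ hY i)) (a ^ k) (ae_of_all _ fun ω ↦ ?_)
    rw [norm_mul]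
    exact (mul_le_of_le_one_left (norm_nonneg _) (by split_ifs <;> simp)).trans (hprod k ω)
  have hF_summable : Summable fun k ↦ ∫ ω, ‖F k ω‖ ∂μ := by
    refine hsum.of_nonneg_of_le (fun k ↦ integral_nonneg fun ω ↦ norm_nonneg _) fun k ↦ ?_
    rw [← integral_ite_eq_measureReal_map hκ, ← integral_mul_const]
    exact integral_mono (hF_int k).norm ((hind_int k).mul_const _) (hF_norm k)
  simp_rw [hF_tsum]
  rw [← integral_tsum_of_summable_integral_norm hF_int hF_summable]
  refine tsum_congr fun k ↦ ?_
  rw [integral_ite_mul_prod_range_of_iIndepFun hκ hY hindep, prod_congr rfl fun i _ ↦ hmean i,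
    prod_const, card_range]

end

lemma iIndepFun_option_rec_comp {Ω : Type*} [MeasurableSpace Ω] {μ : Measure Ω} {κ : Ω → ℕ}
    {τ : ℕ → Ω → ℝ}
    (hindep : iIndepFun
      (fun j : Option ℕ ↦ Option.rec (motive := fun j ↦ Ω → PoissonEstIndex j) κ τ j) μ)
    {f : ℝ → ℝ} (hf : Measurable f) :
    iIndepFun (fun j : Option ℕ ↦
      Option.rec (motive := fun j ↦ Ω → PoissonEstIndex j) κ (fun i ↦ f ∘ τ i) j) μ := by
  let G : ∀ j, PoissonEstIndex j → PoissonEstIndex j := fun j ↦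
    Option.rec (motive := fun j ↦ PoissonEstIndex j → PoissonEstIndex j) id (fun _ ↦ f) j
  have hG : ∀ j, Measurable (G j) := by
    rintro (_ | _)
    · exact measurable_id
    · exact hf
  convert hindep.comp G hG using 1
  funext j
  cases j <;> rfl

/-- Unbiasedness of the Poisson estimator for a fixed path: with bounded
measurable `λ ≥ 0`, constants `c ∈ ℝ`, `η > 0`, `κ ~ Po(η)`, and `τ i` i.i.d.
uniform on `(0, Δ)` independent of `κ`,
`E[exp(c+η)(𝕀_{κ=0} + 𝕀_{κ>0} ∏_{i≤κ} (-Δλ(X_{τ_i}) - c)/η)] = exp(-∫₀^Δ λ(X_s) ds)`. -/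
theorem poisson_estimator_unbiased
    {Ω : Type*} [MeasurableSpace Ω] (μ : Measure Ω) [IsProbabilityMeasure μ]
    (Δ η c : ℝ) (hΔ : 0 < Δ) (hη : 0 < η)
    (lam : ℝ → ℝ) (hlam_meas : Measurable lam) (hlam_nonneg : ∀ x, 0 ≤ lam x)
    (Cb : ℝ) (hlam_bdd : ∀ x, lam x ≤ Cb)
    (Xpath : ℝ → ℝ) (hXpath : Measurable Xpath)
    (κ : Ω → ℕ) (τ : ℕ → Ω → ℝ)
    (hκ : Measure.map κ μ = (poissonPMF (Real.toNNReal η)).toMeasure)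
    (hτ : ∀ i, pdf.IsUniform (τ i) (Set.Ioo (0:ℝ) Δ) μ)
    (h_indep : iIndepFun
      (fun j : Option ℕ =>
        Option.rec (motive := fun j => Ω → PoissonEstIndex j) κ (fun i => τ i) j) μ)
    (E : Ω → ℝ)
    (hE : ∀ ω, E ω = Real.exp (c + η) *
      (if κ ω = 0 then 1 else
        ∏ i ∈ Finset.range (κ ω), ((-(Δ * lam (Xpath (τ i ω))) - c) / η))) :
    ∫ ω, E ω ∂μ = Real.exp (-(∫ s in (0:ℝ)..Δ, lam (Xpath s))) := by
  set I := ∫ s in (0:ℝ)..Δ, lam (Xpath s)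
  set h : ℝ → ℝ := fun t ↦ (-(Δ * lam (Xpath t)) - c) / η
  have hg : Measurable fun s ↦ lam (Xpath s) := by fun_prop
  have hh : Measurable h := by fun_prop
  have hh_bdd (t : ℝ) : ‖h t‖ ≤ (Δ * Cb + |c|) / η :=
    abs_neg_mul_sub_div_le hΔ.le hη (hlam_nonneg _) (hlam_bdd _)
  have hint : IntervalIntegrable (fun s ↦ lam (Xpath s)) volume 0 Δ :=
    (intervalIntegrable_const (c := Cb)).mono_fun' hg.aestronglyMeasurable
      (ae_of_all _ fun s ↦ (norm_of_nonneg (hlam_nonneg _)).trans_le (hlam_bdd _))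
  have hκ_law : μ.map κ = poissonMeasure η.toNNReal := by rw [hκ, poissonPMF_toMeasure]
  have hκ_meas : AEMeasurable κ μ :=
    .of_map_ne_zero (by rw [hκ_law]; exact IsProbabilityMeasure.ne_zero _)
  have hτ_meas (i : ℕ) : AEMeasurable (τ i) μ := (hτ i).aemeasurable (by simp [hΔ]) (by simp)
  have hpgf := hasSum_poissonMeasure_real_singleton_mul_pow η.toNNReal
  have hE' : E = fun ω ↦ exp (c + η) * ∏ i ∈ range (κ ω), h (τ i ω) := by
    funext ω
    rw [hE]
    split_ifs with h0 <;> simp [h0, h]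
  calc ∫ ω, E ω ∂μ = exp (c + η) * ∑' k, (μ.map κ).real {k} * ((-I - c) / η) ^ k := by
        rw [hE', integral_const_mul, integral_prod_range_eq_tsum_of_iIndepFun
          (Y := fun i ω ↦ h (τ i ω)) hκ_meas
          (fun i ↦ (hh.comp_aemeasurable (hτ_meas i)).aestronglyMeasurable)
          (iIndepFun_option_rec_comp h_indep hh) (fun _ _ ↦ hh_bdd _)
          (fun i ↦ integral_neg_mul_comp_sub_div_of_isUniform hΔ (hτ i) hg hint c η)]
        rw [hκ_law]
        exact (hpgf _).summable
    _ = exp (-I) := by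
        rw [hκ_law, (hpgf _).tsum_eq, ← exp_add, Real.coe_toNNReal η hη.le]
        congr 1
        field_simp
        ring
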